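/- arXiv:1708.05569 — 5 statements merged into one kernel-verified Lean document; each statement's English description precedes it below -/
import Mathlib

section
/- If the largest eigenvalue λ₁(M) of the modularity matrix M (symmetric with respect to ⟨·,·⟩_μ) is positive, then max over x ∈ ℝ^n with ⟨x,𝟙⟩_μ = 0 of r_M(x) equals max over all x ∈ ℝ^n of r_M(x) = λ₁(M); in particular λ₁(M) ≥ q_μ(A) for every nontrivial subset A ⊆ V. -/
open Finset

/-!
Since `M` is `μ`-self-adjoint and `M 𝟙 = 0`, the form `⟨x, M x⟩_μ` does not change when a constant
is added to `x`, whereas subtracting the `μ`-mean of `x` (projecting onto `𝟙^⊥`) can only decrease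
`‖x‖²_μ`. Centering a maximizer of `r_M`, whose numerator is positive, therefore gives a vector in
`𝟙^⊥` with quotient at least `λ₁`. Centering the indicator of `A` gives a vector whose quotient is
exactly `q_μ(A)`, hence `q_μ(A) ≤ λ₁`.
-/

noncomputable section

variable {ι : Type*} [Fintype ι]

def weightedQuad (μ : ι → ℝ) (M : ι → ι → ℝ) (x : ι → ℝ) : ℝ :=
  ∑ i, μ i * x i * ∑ j, M i j * x j

def weightedNormSq (μ : ι → ℝ) (x : ι → ℝ) : ℝ :=
  ∑ i, μ i * x i ^ 2

def rayleigh (μ : ι → ℝ) (M : ι → ι → ℝ) (x : ι → ℝ) : ℝ :=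
  weightedQuad μ M x / weightedNormSq μ x

def centered (μ : ι → ℝ) (x : ι → ℝ) : ι → ℝ :=
  fun i => x i - (∑ j, μ j * x j) / ∑ j, μ j

variable {μ : ι → ℝ} {M : ι → ι → ℝ}

theorem sum_weight_pos_of_ne_zero (hμ : ∀ i, 0 < μ i) {x : ι → ℝ} (hx : x ≠ 0) :
    0 < ∑ i, μ i := by
  obtain ⟨i, -⟩ := Function.ne_iff.mp hx
  exact sum_pos (fun i _ => hμ i) ⟨i, mem_univ i⟩

theorem weightedNormSq_pos (hμ : ∀ i, 0 < μ i) {x : ι → ℝ} (hx : x ≠ 0) :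
    0 < weightedNormSq μ x := by
  obtain ⟨i, hi⟩ := Function.ne_iff.mp hx
  exact sum_pos' (fun j _ => mul_nonneg (hμ j).le (sq_nonneg _))
    ⟨i, mem_univ i, mul_pos (hμ i) (sq_pos_of_ne_zero hi)⟩

theorem sum_weight_mul_centered (hμ : ∑ i, μ i ≠ 0) (x : ι → ℝ) :
    ∑ i, μ i * centered μ x i = 0 := by
  simp only [centered, mul_sub, sum_sub_distrib, ← sum_mul, mul_div_cancel₀ _ hμ, sub_self]

theorem weightedNormSq_centered (hμ : ∑ i, μ i ≠ 0) (x : ι → ℝ) :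
    weightedNormSq μ (centered μ x) = weightedNormSq μ x - (∑ i, μ i * x i) ^ 2 / ∑ i, μ i := by
  set c := (∑ i, μ i * x i) / ∑ i, μ i with hc
  have hexpand : ∀ i,
      μ i * centered μ x i ^ 2 = μ i * x i ^ 2 - 2 * c * (μ i * x i) + c ^ 2 * μ i := fun i => by
    simp only [centered, c]
    ring
  simp only [weightedNormSq, hexpand, sum_add_distrib, sum_sub_distrib, ← mul_sum]
  rw [hc]
  field_simp
  ring

section SelfAdjoint

variable (hsym : ∀ i j, μ i * M i j = μ j * M j i) (hrow : ∀ i, ∑ j, M i j = 0)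
include hsym hrow

/-- Self-adjointness moves `M` onto `𝟙`, which it kills. -/
theorem sum_weight_mul_mulVec_eq_zero (x : ι → ℝ) : ∑ i, μ i * ∑ j, M i j * x j = 0 := by
  calc ∑ i, μ i * ∑ j, M i j * x j = ∑ j, x j * (μ j * ∑ i, M j i) := by
        simp only [mul_sum]
        rw [sum_comm]
        refine sum_congr rfl fun j _ => sum_congr rfl fun i _ => ?_
        rw [← mul_assoc, hsym]
        ring
    _ = 0 := by simp [hrow]

theorem weightedQuad_sub_const (x : ι → ℝ) (c : ℝ) :
    weightedQuad μ M (fun i => x i - c) = weightedQuad μ M x := by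
  have hMx : ∀ i, ∑ j, M i j * (x j - c) = ∑ j, M i j * x j := fun i => by
    simp only [mul_sub, sum_sub_distrib, ← sum_mul, hrow, zero_mul, sub_zero]
  calc weightedQuad μ M (fun i => x i - c)
      = weightedQuad μ M x - c * ∑ i, μ i * ∑ j, M i j * x j := by
        simp only [weightedQuad, hMx]
        rw [mul_sum, ← sum_sub_distrib]
        refine sum_congr rfl fun i _ => ?_
        ring
    _ = weightedQuad μ M x := by
        rw [sum_weight_mul_mulVec_eq_zero hsym hrow, mul_zero, sub_zero]

theorem weightedQuad_centered (x : ι → ℝ) :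
    weightedQuad μ M (centered μ x) = weightedQuad μ M x :=
  weightedQuad_sub_const hsym hrow x _

theorem centered_ne_zero_of_weightedQuad_ne_zero (x : ι → ℝ) (hx : weightedQuad μ M x ≠ 0) :
    centered μ x ≠ 0 := by
  intro h0
  apply hx
  rw [← weightedQuad_centered hsym hrow, h0]
  simp [weightedQuad]

theorem rayleigh_le_rayleigh_centered (hμ : ∀ i, 0 < μ i) {x : ι → ℝ}
    (hx : 0 ≤ weightedQuad μ M x) (hcx : centered μ x ≠ 0) :
    rayleigh μ M x ≤ rayleigh μ M (centered μ x) := by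
  have hm := sum_weight_pos_of_ne_zero hμ hcx
  rw [rayleigh, rayleigh, weightedQuad_centered hsym hrow]
  refine div_le_div_of_nonneg_left hx (weightedNormSq_pos hμ hcx) ?_
  rw [weightedNormSq_centered hm.ne']
  have : 0 ≤ (∑ i, μ i * x i) ^ 2 / ∑ i, μ i := by positivity
  linarith

theorem isGreatest_rayleigh_orthogonal_of_isGreatest (hμ : ∀ i, 0 < μ i) {lam : ℝ}
    (hlam : IsGreatest {r | ∃ x : ι → ℝ, x ≠ 0 ∧ r = rayleigh μ M x} lam) (hpos : 0 < lam) :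
    IsGreatest {r | ∃ x : ι → ℝ, x ≠ 0 ∧ ∑ i, μ i * x i = 0 ∧ r = rayleigh μ M x} lam := by
  obtain ⟨⟨y, hy, rfl⟩, hmax⟩ := hlam
  have hquad : 0 < weightedQuad μ M y :=
    (div_pos_iff_of_pos_right (weightedNormSq_pos hμ hy)).mp hpos
  have hcy := centered_ne_zero_of_weightedQuad_ne_zero hsym hrow y hquad.ne'
  refine ⟨⟨centered μ y, hcy, sum_weight_mul_centered (sum_weight_pos_of_ne_zero hμ hy).ne' y,
    le_antisymm (rayleigh_le_rayleigh_centered hsym hrow hμ hquad.le hcy) (hmax ⟨_, hcy, rfl⟩)⟩, ?_⟩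
  rintro r ⟨x, hx, -, rfl⟩
  exact hmax ⟨x, hx, rfl⟩

end SelfAdjoint

section Indicator

variable [DecidableEq ι]

theorem weightedQuad_indicator (A : Finset ι) :
    weightedQuad μ M (fun i => if i ∈ A then 1 else 0) = ∑ i ∈ A, μ i * ∑ j ∈ A, M i j := by
  simp only [weightedQuad, mul_ite, mul_one, mul_zero, ite_mul, zero_mul, Fintype.sum_ite_mem]

theorem weightedNormSq_indicator (A : Finset ι) :
    weightedNormSq μ (fun i => if i ∈ A then 1 else 0) = ∑ i ∈ A, μ i := by
  simp only [weightedNormSq, ite_pow, one_pow, ne_eq, OfNat.ofNat_ne_zero, not_false_eq_true,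
    zero_pow, mul_ite, mul_one, mul_zero, Fintype.sum_ite_mem]

theorem centered_indicator_ne_zero {A : Finset ι} {i j : ι} (hi : i ∈ A) (hj : j ∉ A) :
    centered μ (fun k => if k ∈ A then 1 else 0) ≠ 0 := by
  intro h
  have hci := congrFun h i
  have hcj := congrFun h j
  simp only [centered, hi, hj, if_true, if_false, Pi.zero_apply] at hci hcj
  linarith

theorem rayleigh_centered_indicator (hμ : ∀ i, 0 < μ i) (hsym : ∀ i j, μ i * M i j = μ j * M j i)
    (hrow : ∀ i, ∑ j, M i j = 0) {A : Finset ι} (hA : A.Nonempty) (hAc : Aᶜ.Nonempty) :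
    rayleigh μ M (centered μ (fun i => if i ∈ A then 1 else 0)) =
      (∑ i, μ i) * (∑ i ∈ A, μ i * ∑ j ∈ A, M i j) / ((∑ j ∈ A, μ j) * ∑ j ∈ Aᶜ, μ j) := by
  have ha : 0 < ∑ j ∈ A, μ j := sum_pos (fun i _ => hμ i) hA
  have hb : 0 < ∑ j ∈ Aᶜ, μ j := sum_pos (fun i _ => hμ i) hAc
  have hsplit := sum_add_sum_compl A μ
  have hsum : ∑ i, μ i * (if i ∈ A then 1 else 0) = ∑ i ∈ A, μ i := by
    simp only [mul_ite, mul_one, mul_zero, Fintype.sum_ite_mem]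
  rw [rayleigh, weightedQuad_centered hsym hrow, weightedQuad_indicator,
    weightedNormSq_centered (by linarith), weightedNormSq_indicator, hsum, ← hsplit]
  field_simp [ha.ne', hb.ne']
  ring

end Indicator

end

theorem sum_weight_mul_sum_eq_modularity {ι : Type*} {μ : ι → ℝ} {M w : ι → ι → ℝ} {d : ι → ℝ}
    {vol : ℝ} (hμ : ∀ i, μ i ≠ 0) (hM : ∀ i j, M i j = (1 / μ i) * (w i j - d i * d j / vol))
    (A : Finset ι) :
    ∑ i ∈ A, μ i * ∑ j ∈ A, M i j = (∑ i ∈ A, ∑ j ∈ A, w i j) - (∑ i ∈ A, d i) ^ 2 / vol := by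
  simp only [hM, mul_sum, ← mul_assoc, mul_one_div_cancel (hμ _), one_mul, sum_sub_distrib]
  rw [sq, sum_mul_sum, sum_div]
  simp only [sum_div]

theorem linear_relaxation_normalized_modularity_general
    (n : ℕ) (w : Fin n → Fin n → ℝ) (μ d : Fin n → ℝ) (volV μV : ℝ)
    (M : Fin n → Fin n → ℝ) (Q qmu : Finset (Fin n) → ℝ)
    (rM : (Fin n → ℝ) → ℝ) (lam : ℝ)
    (hμ : ∀ i, 0 < μ i)
    (hμV : μV = ∑ i, μ i)
    (hM : ∀ i j, M i j = (1 / μ i) * (w i j - d i * d j / volV))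
    (hsym : ∀ i j, μ i * M i j = μ j * M j i)
    (hrow : ∀ i, ∑ j, M i j = 0)
    (hQ : ∀ A : Finset (Fin n),
      Q A = (∑ i ∈ A, ∑ j ∈ A, w i j) - (∑ i ∈ A, d i) ^ 2 / volV)
    (hqmu : ∀ A : Finset (Fin n),
      qmu A = μV * Q A / ((∑ j ∈ A, μ j) * (∑ j ∈ Aᶜ, μ j)))
    (hrM : ∀ x, rM x = (∑ i, μ i * x i * (∑ j, M i j * x j)) / (∑ i, μ i * x i ^ 2))
    (hlam : IsGreatest {r : ℝ | ∃ x : Fin n → ℝ, x ≠ 0 ∧ r = rM x} lam)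
    (hpos : 0 < lam) :
    IsGreatest {r : ℝ | ∃ x : Fin n → ℝ,
        x ≠ 0 ∧ (∑ i, μ i * x i) = 0 ∧ r = rM x} lam ∧
    ∀ A : Finset (Fin n), A ≠ ∅ → A ≠ Finset.univ → qmu A ≤ lam := by
  obtain rfl : rM = rayleigh μ M := funext hrM
  subst hμV
  refine ⟨isGreatest_rayleigh_orthogonal_of_isGreatest hsym hrow hμ hlam hpos, fun A hA hAu => ?_⟩
  obtain ⟨i, hi⟩ := nonempty_iff_ne_empty.mpr hA
  obtain ⟨j, -, hj⟩ := exists_of_ssubset (ssubset_univ_iff.mpr hAu)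
  rw [hqmu, hQ, ← sum_weight_mul_sum_eq_modularity (fun i => (hμ i).ne') hM,
    ← rayleigh_centered_indicator hμ hsym hrow ⟨i, hi⟩ ⟨j, mem_compl.mpr hj⟩]
  exact hlam.2 ⟨_, centered_indicator_ne_zero hi hj, rfl⟩

/-- If the largest eigenvalue `λ₁(M)` of the modularity matrix is positive,
then the maximum of the Rayleigh quotient `r_M` over vectors μ-orthogonal to
`𝟙` equals `λ₁(M)`; in particular `λ₁(M) ≥ q_μ(A)` for every nontrivial
subset `A`. -/
theorem linear_relaxation_normalized_modularity
    (n : ℕ) (w : Fin n → Fin n → ℝ) (μ d : Fin n → ℝ) (volV μV : ℝ)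
    (M : Fin n → Fin n → ℝ) (Q qmu : Finset (Fin n) → ℝ)
    (rM : (Fin n → ℝ) → ℝ) (lam : ℝ)
    (hμ : ∀ i, 0 < μ i)
    (hsymw : ∀ i j, w i j = w j i)
    (hd : ∀ i, d i = ∑ j, w i j)
    (hvol : volV = ∑ i, d i)
    (hvolpos : 0 < volV)
    (hμV : μV = ∑ i, μ i)
    (hM : ∀ i j, M i j = (1 / μ i) * (w i j - d i * d j / volV))
    (hsym : ∀ i j, μ i * M i j = μ j * M j i)
    (hrow : ∀ i, ∑ j, M i j = 0)
    (hQ : ∀ A : Finset (Fin n),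
      Q A = (∑ i ∈ A, ∑ j ∈ A, w i j) - (∑ i ∈ A, d i) ^ 2 / volV)
    (hqmu : ∀ A : Finset (Fin n),
      qmu A = μV * Q A / ((∑ j ∈ A, μ j) * (∑ j ∈ Aᶜ, μ j)))
    (hrM : ∀ x, rM x = (∑ i, μ i * x i * (∑ j, M i j * x j)) / (∑ i, μ i * x i ^ 2))
    (hlam : IsGreatest {r : ℝ | ∃ x : Fin n → ℝ, x ≠ 0 ∧ r = rM x} lam)
    (hpos : 0 < lam) :
    IsGreatest {r : ℝ | ∃ x : Fin n → ℝ,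
        x ≠ 0 ∧ (∑ i, μ i * x i) = 0 ∧ r = rM x} lam ∧
    ∀ A : Finset (Fin n), A ≠ ∅ → A ≠ Finset.univ → qmu A ≤ lam :=
  linear_relaxation_normalized_modularity_general n w μ d volV μV M Q qmu rM lam hμ hμV hM hsym hrow
    hQ hqmu hrM hlam hpos
end

section
/- Let F, H: P(V) → ℝ be set functions with 0 < H(A) ≤ 1 for all A ∉ {∅, V}, and F(V) = 0. Then max_{A ⊆ V} F(A)/H(A) ≥ (1/2) max_{‖x‖_∞ ≤ 1} f_F(x), where f_F is the Lovász extension of F. -/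
/-!
Sort `x` increasingly along `σ`. Since `F(V) = 0`, the Lovász extension is the sum of
`F` on the superlevel sets weighted by the nonnegative increments of `x`, and a superlevel set
carrying a positive increment is neither empty nor `V`. With `ρ` the largest ratio `F(A)/H(A)`,
which is `≥ F(V)/H(V) = 0`, each such set has `F ≤ ρ H ≤ ρ`; the increments sum to
`max x - min x ≤ 2`.
-/

open Finset

/-- The Lovász extension of a set function, computed with respect to a
sorting permutation `σ` of `x`. -/
noncomputable def lovasz {n : ℕ} (F : Finset (Fin (n + 1)) → ℝ)
    (x : Fin (n + 1) → ℝ) (σ : Equiv.Perm (Fin (n + 1))) : ℝ :=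
  (∑ i : Fin n,
      F (Finset.univ.filter fun k => x (σ i.succ) ≤ x (σ k)) *
        (x (σ i.succ) - x (σ i.castSucc)))
    + F Finset.univ * x (σ 0)

theorem Fin.sum_univ_succ_sub_castSucc {M : Type*} [AddCommGroup M] {n : ℕ}
    (f : Fin (n + 1) → M) :
    ∑ i : Fin n, (f i.succ - f i.castSucc) = f (Fin.last n) - f 0 := by
  rw [sum_sub_distrib]
  have hsucc := Fin.sum_univ_succ f
  have hcast := Fin.sum_univ_castSucc f
  rw [eq_sub_of_add_eq' hsucc.symm, eq_sub_of_add_eq hcast.symm]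
  abel

theorem filter_le_apply_ne_empty_and_ne_univ {α β : Type*} [Fintype α] [LinearOrder β]
    {y : α → β} {a b : α} (hab : y a < y b) :
    univ.filter (fun k => y b ≤ y k) ≠ ∅ ∧ univ.filter (fun k => y b ≤ y k) ≠ univ := by
  constructor
  · exact ne_empty_of_mem (a := b) (by simp)
  · intro h
    have ha : a ∈ univ.filter (fun k => y b ≤ y k) := by rw [h]; exact mem_univ a
    exact (mem_filter.1 ha).2.not_gt hab

theorem le_of_div_le_of_le_one {f h ρ : ℝ} (hρ : 0 ≤ ρ) (hh : 0 < h) (hh1 : h ≤ 1)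
    (hfh : f / h ≤ ρ) : f ≤ ρ :=
  calc f ≤ ρ * h := (div_le_iff₀ hh).1 hfh
    _ ≤ ρ := mul_le_of_le_one_right hρ hh1

section Lovasz

variable {n : ℕ} {F : Finset (Fin (n + 1)) → ℝ} {x : Fin (n + 1) → ℝ}
  {σ : Equiv.Perm (Fin (n + 1))}

theorem lovasz_le_mul_sub (hFV : F univ = 0) (hmono : Monotone (x ∘ σ)) {ρ : ℝ}
    (hF : ∀ A, A ≠ ∅ → A ≠ univ → F A ≤ ρ) :
    lovasz F x σ ≤ ρ * (x (σ (Fin.last n)) - x (σ 0)) := by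
  have htelescope := Fin.sum_univ_succ_sub_castSucc (x ∘ σ)
  simp only [Function.comp_apply] at htelescope
  rw [lovasz, hFV, zero_mul, add_zero, ← htelescope, mul_sum]
  refine sum_le_sum fun i _ => ?_
  have hinc : x (σ i.castSucc) ≤ x (σ i.succ) := hmono Fin.castSucc_lt_succ.le
  rcases hinc.eq_or_lt with heq | hlt
  · simp [heq]
  · obtain ⟨hne, hnu⟩ := filter_le_apply_ne_empty_and_ne_univ (y := x ∘ σ) hlt
    exact mul_le_mul_of_nonneg_right (hF _ hne hnu) (sub_nonneg.2 hinc)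

theorem lovasz_le_two_mul (hFV : F univ = 0) (hmono : Monotone (x ∘ σ))
    (hx : ∀ i, |x i| ≤ 1) {ρ : ℝ} (hρ : 0 ≤ ρ) (hF : ∀ A, A ≠ ∅ → A ≠ univ → F A ≤ ρ) :
    lovasz F x σ ≤ 2 * ρ := by
  have hrange : x (σ (Fin.last n)) - x (σ 0) ≤ 2 := by
    linarith [le_of_abs_le (hx (σ (Fin.last n))), neg_le_of_abs_le (hx (σ 0))]
  calc lovasz F x σ ≤ ρ * (x (σ (Fin.last n)) - x (σ 0)) := lovasz_le_mul_sub hFV hmono hF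
    _ ≤ ρ * 2 := mul_le_mul_of_nonneg_left hrange hρ
    _ = 2 * ρ := mul_comm ρ 2

end Lovasz

theorem ratio_bound_lovasz_general
    (n : ℕ) (F H : Finset (Fin (n + 1)) → ℝ)
    (hFV : F Finset.univ = 0)
    (hH : ∀ A : Finset (Fin (n + 1)), A ≠ ∅ → A ≠ Finset.univ →
      0 < H A ∧ H A ≤ 1) :
    ∀ (x : Fin (n + 1) → ℝ) (σ : Equiv.Perm (Fin (n + 1))),
      Monotone (x ∘ σ) → (∀ i, |x i| ≤ 1) →
      ∃ A : Finset (Fin (n + 1)), lovasz F x σ ≤ 2 * (F A / H A) := by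
  intro x σ hmono hx
  obtain ⟨A, -, hAmax⟩ := exists_max_image univ (fun A => F A / H A) univ_nonempty
  have hρ : 0 ≤ F A / H A := by simpa [hFV] using hAmax univ (mem_univ _)
  refine ⟨A, lovasz_le_two_mul hFV hmono hx hρ fun B hB hB' => ?_⟩
  obtain ⟨hHpos, hH1⟩ := hH B hB hB'
  exact le_of_div_le_of_le_one hρ hHpos hH1 (hAmax B (mem_univ _))

/-- If `0 < H(A) ≤ 1` for all nontrivial `A` and `F(V) = 0`, then
`max_{A⊆V} F(A)/H(A) ≥ (1/2) max_{‖x‖_∞ ≤ 1} f_F(x)`. -/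
theorem ratio_bound_lovasz
    (n : ℕ) (F H : Finset (Fin (n + 1)) → ℝ)
    (hF0 : F ∅ = 0) (hFV : F Finset.univ = 0)
    (hH : ∀ A : Finset (Fin (n + 1)), A ≠ ∅ → A ≠ Finset.univ →
      0 < H A ∧ H A ≤ 1) :
    ∀ (x : Fin (n + 1) → ℝ) (σ : Equiv.Perm (Fin (n + 1))),
      Monotone (x ∘ σ) → (∀ i, |x i| ≤ 1) →
      ∃ A : Finset (Fin (n + 1)), lovasz F x σ ≤ 2 * (F A / H A) :=
  ratio_bound_lovasz_general n F H hFV hH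
end

section
/- Exactness of the dual nonlinear relaxation: r*_𝓜(𝟙_A − 𝟙_{V∖A}) = q(A)·μ(V) for every A ⊆ V, and max_{A⊆V} q(A) = (1/μ(V)) · max_{x ∈ ℝ^n, x≠0} r*_𝓜(x), where r*_𝓜(x) = ⟨x, 𝓜(x)⟩_μ / ‖x‖_∞. -/
/-!
With `B = w - d dᵀ / vol(V)` we have `μ_i (-M_ij) = -B_ij`, so `⟨x, 𝓜(x)⟩_μ` is
`-(1/2) Σ B_ij |x_i - x_j|`. Since `B` has zero row and column sums, this equals
`Σ_{i,j ∈ A} B_ij = Q(A)` at `x = 𝟙_A`, and hence `2 Q(A)` at `x = 𝟙_A - 𝟙_{V∖A}`, whose sup norm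
is `1`. Conversely, the layer-cake formula `|a - b| = ∫ |𝟙[t < a] - 𝟙[t < b]| dt` writes
`⟨x, 𝓜(x)⟩_μ` as `∫ Q({x > t}) dt`, where only `t ∈ [-‖x‖_∞, ‖x‖_∞)` contributes; so it is at most
`2 ‖x‖_∞ max_A Q(A)`.
-/

open Finset MeasureTheory

noncomputable section LovaszExtension

variable {ι : Type*} [Fintype ι] (B : ι → ι → ℝ)

def blockSum (A : Finset ι) : ℝ := ∑ i ∈ A, ∑ j ∈ A, B i j

def lovaszExt (x : ι → ℝ) : ℝ := -(1 / 2) * ∑ i, ∑ j, B i j * |x i - x j|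

theorem blockSum_univ (hrow : ∀ i, ∑ j, B i j = 0) : blockSum B univ = 0 := by
  simp [blockSum, hrow]

theorem lovaszExt_affine (x : ι → ℝ) (c t : ℝ) :
    lovaszExt B (fun i => c * x i + t) = |c| * lovaszExt B x := by
  have h : ∀ i j, |c * x i + t - (c * x j + t)| = |c| * |x i - x j| := fun i j => by
    rw [← abs_mul]; ring_nf
  simp only [lovaszExt, h, mul_left_comm _ |c|, ← mul_sum]

theorem lovaszExt_indicator [DecidableEq ι] (hrow : ∀ i, ∑ j, B i j = 0)
    (hcol : ∀ j, ∑ i, B i j = 0) (A : Finset ι) :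
    lovaszExt B (fun i => if i ∈ A then 1 else 0) = blockSum B A := by
  set c : ι → ℝ := fun i => if i ∈ A then 1 else 0
  have hcut : ∀ i j,
      B i j * |c i - c j| = c i * B i j + B i j * c j - 2 * (c i * B i j * c j) :=
    fun i j => by by_cases hi : i ∈ A <;> by_cases hj : j ∈ A <;> simp [c, hi, hj]; ring
  have hleft : ∑ i, ∑ j, c i * B i j = 0 := by simp [← mul_sum, hrow]
  have hright : ∑ i, ∑ j, B i j * c j = 0 := by
    rw [sum_comm]; simp [← sum_mul, hcol]
  have hblock : ∑ i, ∑ j, c i * B i j * c j = blockSum B A := by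
    simp [c, blockSum, ite_mul, mul_ite, sum_ite_mem]
  simp only [lovaszExt, hcut, sum_sub_distrib, sum_add_distrib, hleft, hright]
  simp only [← mul_sum, hblock]
  ring

theorem abs_sub_step_eq_indicator (a b t : ℝ) :
    |(if t < a then (1 : ℝ) else 0) - (if t < b then 1 else 0)|
      = (Set.Ico (min a b) (max a b)).indicator 1 t := by
  by_cases ha : t < a <;> by_cases hb : t < b <;> simp [ha, hb, Set.indicator]

theorem abs_sub_eq_integral_abs_sub_step (a b : ℝ) :
    |a - b| = ∫ t, |(if t < a then (1 : ℝ) else 0) - (if t < b then 1 else 0)| := by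
  simp only [abs_sub_step_eq_indicator, integral_indicator_one measurableSet_Ico,
    Real.volume_real_Ico_of_le min_le_max, max_sub_min_eq_abs']

theorem integrable_abs_sub_step (a b : ℝ) :
    Integrable fun t => |(if t < a then (1 : ℝ) else 0) - (if t < b then 1 else 0)| := by
  simp only [abs_sub_step_eq_indicator]
  exact (integrableOn_const measure_Ico_lt_top.ne).integrable_indicator measurableSet_Ico

def superlevelIndicator (x : ι → ℝ) (t : ℝ) : ι → ℝ := fun i => if t < x i then 1 else 0

theorem integrable_lovaszExt_superlevelIndicator (x : ι → ℝ) :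
    Integrable fun t => lovaszExt B (superlevelIndicator x t) :=
  (integrable_finsetSum _ fun i _ => integrable_finsetSum _ fun j _ =>
    (integrable_abs_sub_step (x i) (x j)).const_mul (B i j)).const_mul _

theorem lovaszExt_eq_integral_superlevelIndicator (x : ι → ℝ) :
    lovaszExt B x = ∫ t, lovaszExt B (superlevelIndicator x t) := by
  have hint : ∀ i j, Integrable fun t =>
      B i j * |(if t < x i then (1 : ℝ) else 0) - (if t < x j then 1 else 0)| :=
    fun i j => (integrable_abs_sub_step (x i) (x j)).const_mul (B i j)
  simp only [lovaszExt, superlevelIndicator]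
  rw [integral_const_mul,
    integral_finsetSum _ fun i _ => integrable_finsetSum _ fun j _ => hint i j]
  refine congrArg _ (sum_congr rfl fun i _ => ?_)
  rw [integral_finsetSum _ fun j _ => hint i j]
  refine sum_congr rfl fun j _ => ?_
  rw [integral_const_mul, ← abs_sub_eq_integral_abs_sub_step]

theorem lovaszExt_le_mul_of_blockSum_le (hrow : ∀ i, ∑ j, B i j = 0)
    (hcol : ∀ j, ∑ i, B i j = 0) {Qmax : ℝ} (hQmax : ∀ A, blockSum B A ≤ Qmax)
    {x : ι → ℝ} {a b : ℝ} (hab : a ≤ b) (hx : ∀ i, x i ∈ Set.Icc a b) :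
    lovaszExt B x ≤ (b - a) * Qmax := by
  classical
  have hlevel : ∀ t,
      lovaszExt B (superlevelIndicator x t) ≤ (Set.Ico a b).indicator (fun _ => Qmax) t := by
    intro t
    have hset :
        superlevelIndicator x t = fun i => if i ∈ univ.filter (t < x ·) then 1 else 0 := by
      ext i; simp [superlevelIndicator]
    rw [hset, lovaszExt_indicator B hrow hcol]
    by_cases hta : t < a
    · rw [filter_true_of_mem fun i _ => hta.trans_le (hx i).1, blockSum_univ B hrow,
        Set.indicator_of_notMem fun ht => (not_le.2 hta) ht.1]
    by_cases htb : t < b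
    · rw [Set.indicator_of_mem (Set.mem_Ico.2 ⟨not_lt.1 hta, htb⟩)]
      exact hQmax _
    · rw [filter_false_of_mem fun i _ => not_lt.2 ((hx i).2.trans (not_lt.1 htb)),
        Set.indicator_of_notMem fun ht => htb ht.2]
      simp [blockSum]
  calc lovaszExt B x = ∫ t, lovaszExt B (superlevelIndicator x t) :=
        lovaszExt_eq_integral_superlevelIndicator B x
    _ ≤ ∫ t, (Set.Ico a b).indicator (fun _ => Qmax) t :=
      integral_mono (integrable_lovaszExt_superlevelIndicator B x)
        ((integrableOn_const measure_Ico_lt_top.ne).integrable_indicator measurableSet_Ico) hlevel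
    _ = (b - a) * Qmax := by
      rw [integral_indicator_const _ measurableSet_Ico, Real.volume_real_Ico_of_le hab, smul_eq_mul]

theorem lovaszExt_div_sup'_abs_le [Nonempty ι] (hrow : ∀ i, ∑ j, B i j = 0)
    (hcol : ∀ j, ∑ i, B i j = 0) {Qmax : ℝ} (hQmax : ∀ A, blockSum B A ≤ Qmax)
    {x : ι → ℝ} (hx : x ≠ 0) :
    lovaszExt B x / univ.sup' univ_nonempty (fun i => |x i|) ≤ 2 * Qmax := by
  set N := univ.sup' univ_nonempty fun i => |x i|
  have hbound : ∀ i, |x i| ≤ N := fun i => le_sup' (fun i => |x i|) (mem_univ i)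
  obtain ⟨i, hi⟩ := Function.ne_iff.1 hx
  have hN : 0 < N := (abs_pos.2 hi).trans_le (hbound i)
  rw [div_le_iff₀ hN]
  linarith [lovaszExt_le_mul_of_blockSum_le B hrow hcol hQmax (neg_le_self hN.le)
    fun i => abs_le.1 (hbound i)]

theorem half_sum_weighted_eq_lovaszExt {μ : ι → ℝ} (hμ : ∀ i, μ i ≠ 0) (x : ι → ℝ) :
    (1 / 2) * ∑ i, ∑ j, μ i * -(1 / μ i * B i j) * |x i - x j| = lovaszExt B x := by
  have hterm : ∀ i j, μ i * -(1 / μ i * B i j) * |x i - x j| = -(B i j * |x i - x j|) :=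
    fun i j => by rw [mul_neg, ← mul_assoc, mul_one_div_cancel (hμ i), one_mul, neg_mul]
  simp only [lovaszExt, hterm, sum_neg_distrib]
  ring

end LovaszExtension

section SignVector

variable {ι : Type*} [DecidableEq ι]

def signVec (A : Finset ι) : ι → ℝ := fun i => if i ∈ A then 1 else -1

theorem signVec_eq_affine_indicator (A : Finset ι) :
    signVec A = fun i => 2 * (if i ∈ A then 1 else 0) + -1 := by
  ext i; unfold signVec; split_ifs <;> norm_num

theorem sup'_abs_signVec [Fintype ι] [Nonempty ι] (A : Finset ι) :
    univ.sup' univ_nonempty (fun i => |signVec A i|) = 1 := by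
  obtain ⟨i₀⟩ := ‹Nonempty ι›
  refine le_antisymm (sup'_le _ _ fun i _ => ?_) (le_sup'_of_le _ (mem_univ i₀) ?_) <;>
    unfold signVec <;> split_ifs <;> simp

theorem signVec_ne_zero [Nonempty ι] (A : Finset ι) : signVec A ≠ 0 := fun h => by
  obtain ⟨i₀⟩ := ‹Nonempty ι›
  have := congrFun h i₀
  unfold signVec at this
  split_ifs at this <;> norm_num at this

theorem lovaszExt_signVec [Fintype ι] (B : ι → ι → ℝ) (hrow : ∀ i, ∑ j, B i j = 0)
    (hcol : ∀ j, ∑ i, B i j = 0) (A : Finset ι) :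
    lovaszExt B (signVec A) = 2 * blockSum B A := by
  rw [signVec_eq_affine_indicator, lovaszExt_affine, lovaszExt_indicator B hrow hcol, abs_two]

end SignVector

section Modularity

variable {ι : Type*} (w : ι → ι → ℝ) (d : ι → ℝ) (volV : ℝ)

theorem sum_modularity_eq_zero [Fintype ι] (hd : ∀ i, d i = ∑ j, w i j)
    (hvol : volV = ∑ i, d i) (hvol₀ : volV ≠ 0) (i : ι) : ∑ j, (w i j - d i * d j / volV) = 0 := by
  rw [sum_sub_distrib, ← hd, ← sum_div, ← mul_sum, ← hvol, mul_div_cancel_right₀ _ hvol₀, sub_self]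

theorem blockSum_modularity (A : Finset ι) :
    blockSum (fun i j => w i j - d i * d j / volV) A
      = (∑ i ∈ A, ∑ j ∈ A, w i j) - (∑ i ∈ A, d i) ^ 2 / volV := by
  simp only [blockSum, sum_sub_distrib, ← sum_div, ← mul_sum, ← sum_mul]
  ring

end Modularity

theorem exact_relaxation_modularity_dual_general
    (n : ℕ) (w : Fin (n + 1) → Fin (n + 1) → ℝ)
    (μ d : Fin (n + 1) → ℝ) (volV μV : ℝ)
    (M : Fin (n + 1) → Fin (n + 1) → ℝ)
    (Q q : Finset (Fin (n + 1)) → ℝ)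
    (Ecal rstar : (Fin (n + 1) → ℝ) → ℝ)
    (hμ : ∀ i, 0 < μ i)
    (hsymw : ∀ i j, w i j = w j i)
    (hd : ∀ i, d i = ∑ j, w i j)
    (hvol : volV = ∑ i, d i)
    (hvolpos : 0 < volV)
    (hμV : μV = ∑ i, μ i)
    (hM : ∀ i j, M i j = (1 / μ i) * (w i j - d i * d j / volV))
    (hQ : ∀ A : Finset (Fin (n + 1)),
      Q A = (∑ i ∈ A, ∑ j ∈ A, w i j) - (∑ i ∈ A, d i) ^ 2 / volV)
    (hq : ∀ A : Finset (Fin (n + 1)), q A = 2 * Q A / μV)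
    (hE : ∀ x, Ecal x = (1 / 2) * ∑ i, ∑ j, μ i * (-(M i j)) * |x i - x j|)
    (hrstar : ∀ x, rstar x
      = Ecal x / (Finset.univ.sup' Finset.univ_nonempty fun i => |x i|)) :
    (∀ A : Finset (Fin (n + 1)),
      rstar (fun i => if i ∈ A then (1 : ℝ) else -1) = q A * μV) ∧
    ∀ L : ℝ,
      IsGreatest {r : ℝ | ∃ x : Fin (n + 1) → ℝ, x ≠ 0 ∧ r = rstar x} L →
      IsGreatest {r : ℝ | ∃ A : Finset (Fin (n + 1)), r = q A} (L / μV) := by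
  set B : Fin (n + 1) → Fin (n + 1) → ℝ := fun i j => w i j - d i * d j / volV
  have hrow : ∀ i, ∑ j, B i j = 0 := sum_modularity_eq_zero w d volV hd hvol hvolpos.ne'
  have hcol : ∀ j, ∑ i, B i j = 0 := fun j => by
    simpa only [B, hsymw j, mul_comm (d j)] using hrow j
  have hQB : ∀ A, Q A = blockSum B A := fun A => by rw [hQ, blockSum_modularity]
  have hEB : ∀ x, Ecal x = lovaszExt B x := fun x => by
    simp only [hE, hM]
    exact half_sum_weighted_eq_lovaszExt B (fun i => (hμ i).ne') x
  have hμVpos : 0 < μV := hμV ▸ sum_pos (fun i _ => hμ i) univ_nonempty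
  have hsign : ∀ A, rstar (signVec A) = q A * μV := fun A => by
    rw [hrstar, sup'_abs_signVec, div_one, hEB, lovaszExt_signVec B hrow hcol, hq, ← hQB]
    field_simp
  obtain ⟨Amax, -, hAmax⟩ := exists_max_image univ (blockSum B) univ_nonempty
  have hrstar_le : ∀ x, x ≠ 0 → rstar x ≤ q Amax * μV := fun x hx => by
    rw [hrstar, hEB, hq, div_mul_cancel₀ _ hμVpos.ne', hQB]
    exact lovaszExt_div_sup'_abs_le B hrow hcol (fun A => hAmax A (mem_univ A)) hx
  refine ⟨hsign, fun L hL => ?_⟩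
  obtain rfl : L = q Amax * μV :=
    hL.unique ⟨⟨_, signVec_ne_zero Amax, (hsign Amax).symm⟩,
      fun _ ⟨x, hx, hr⟩ => hr ▸ hrstar_le x hx⟩
  rw [mul_div_cancel_right₀ _ hμVpos.ne']
  refine ⟨⟨Amax, rfl⟩, ?_⟩
  rintro _ ⟨A, rfl⟩
  rw [hq, hq, hQB, hQB]
  gcongr
  exact hAmax A (mem_univ A)

/-- Exactness of the dual nonlinear relaxation: `r*_𝓜(𝟙_A − 𝟙_{V∖A}) = q(A)μ(V)`
for every `A ⊆ V`, and `max_A q(A) = (1/μ(V)) max_{x ≠ 0} r*_𝓜(x)`. -/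
theorem exact_relaxation_modularity_dual
    (n : ℕ) (w : Fin (n + 1) → Fin (n + 1) → ℝ)
    (μ d : Fin (n + 1) → ℝ) (volV μV : ℝ)
    (M : Fin (n + 1) → Fin (n + 1) → ℝ)
    (Q q : Finset (Fin (n + 1)) → ℝ)
    (Ecal rstar : (Fin (n + 1) → ℝ) → ℝ)
    (hμ : ∀ i, 0 < μ i)
    (hsymw : ∀ i j, w i j = w j i)
    (hnonneg : ∀ i j, 0 ≤ w i j)
    (hd : ∀ i, d i = ∑ j, w i j)
    (hvol : volV = ∑ i, d i)
    (hvolpos : 0 < volV)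
    (hμV : μV = ∑ i, μ i)
    (hM : ∀ i j, M i j = (1 / μ i) * (w i j - d i * d j / volV))
    (hQ : ∀ A : Finset (Fin (n + 1)),
      Q A = (∑ i ∈ A, ∑ j ∈ A, w i j) - (∑ i ∈ A, d i) ^ 2 / volV)
    (hq : ∀ A : Finset (Fin (n + 1)), q A = 2 * Q A / μV)
    (hE : ∀ x, Ecal x = (1 / 2) * ∑ i, ∑ j, μ i * (-(M i j)) * |x i - x j|)
    (hrstar : ∀ x, rstar x
      = Ecal x / (Finset.univ.sup' Finset.univ_nonempty fun i => |x i|)) :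
    (∀ A : Finset (Fin (n + 1)),
      rstar (fun i => if i ∈ A then (1 : ℝ) else -1) = q A * μV) ∧
    ∀ L : ℝ,
      IsGreatest {r : ℝ | ∃ x : Fin (n + 1) → ℝ, x ≠ 0 ∧ r = rstar x} L →
      IsGreatest {r : ℝ | ∃ A : Finset (Fin (n + 1)), r = q A} (L / μV) :=
  exact_relaxation_modularity_dual_general n w μ d volV μV M Q q Ecal rstar hμ hsymw hd hvol hvolpos
    hμV hM hQ hq hE hrstar
end

section
/- Monotonicity of generalized RatioDCA: let f₁,f₂,g₁,g₂: ℝ^n → ℝ be convex positively one-homogeneous with g₁ − g₂ ≥ 0 and r(x) = (f₁(x) − f₂(x))/(g₁(x) − g₂(x)) (defined where the denominator is positive). If λ_k = r(x_k) ≥ 0, F₂(x_k) ∈ ∂f₂(x_k), G₁(x_k) ∈ ∂g₁(x_k), and x_{k+1} minimizes ξ ↦ f₁(ξ) − ⟨ξ,F₂(x_k)⟩ + λ_k(g₂(ξ) − ⟨ξ,G₁(x_k)⟩) over the unit ball, with minimum value strictly negative, then r(x_{k+1}) < λ_k. -/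
open Finset

/-!
A subgradient `F` of a positively one-homogeneous `f` at any point is a global linear minorant,
`⟨z, F⟩ ≤ f z` (the subgradient inequality at `2 • x` gives `⟨x, F⟩ ≤ f x`). Applied to `F₂` and,
scaled by `λ ≥ 0`, to `G₁`, this bounds `f₁ - f₂ - λ (g₁ - g₂)` at `x_{k+1}` by the inner
objective there, which is negative.
-/

theorem map_le_of_subgradient_of_posHomogeneous {E : Type*} [AddCommGroup E] [Module ℝ E]
    {f : E → ℝ} (hf : ∀ α : ℝ, 0 ≤ α → ∀ x, f (α • x) = α * f x) (φ : E →ₗ[ℝ] ℝ) {x : E}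
    (hφ : ∀ z, f x + φ (z - x) ≤ f z) (z : E) : φ z ≤ f z := by
  have hx : φ x ≤ f x := by
    have h := hφ ((2 : ℝ) • x)
    rw [hf 2 zero_le_two, two_smul, add_sub_cancel_right] at h
    linarith
  have hz := hφ z
  rw [map_sub] at hz
  linarith

theorem dotProduct_le_of_subgradient_of_posHomogeneous {n : ℕ} {f : (Fin n → ℝ) → ℝ}
    (hf : ∀ α : ℝ, 0 ≤ α → ∀ x, f (α • x) = α * f x) {s x : Fin n → ℝ}
    (hs : ∀ z, f z ≥ f x + ∑ i, s i * (z i - x i)) (z : Fin n → ℝ) :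
    ∑ i, z i * s i ≤ f z := by
  have h := map_le_of_subgradient_of_posHomogeneous hf (dotProductBilin ℝ ℝ s) hs z
  rwa [dotProductBilin_apply_apply, dotProduct_comm] at h

theorem generalized_ratioDCA_monotone_general
    (n : ℕ) (f₁ f₂ g₁ g₂ : (Fin n → ℝ) → ℝ)
    (hhom₂ : ∀ (α : ℝ), 0 ≤ α → ∀ x, f₂ (α • x) = α * f₂ x)
    (hhom₃ : ∀ (α : ℝ), 0 ≤ α → ∀ x, g₁ (α • x) = α * g₁ x)
    (xk xk1 F2 G1 : Fin n → ℝ) (lam : ℝ)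
    (hF2 : ∀ z, f₂ z ≥ f₂ xk + ∑ i, F2 i * (z i - xk i))
    (hG1 : ∀ z, g₁ z ≥ g₁ xk + ∑ i, G1 i * (z i - xk i))
    (hlam0 : 0 ≤ lam)
    (hneg : f₁ xk1 - (∑ i, xk1 i * F2 i)
        + lam * (g₂ xk1 - ∑ i, xk1 i * G1 i) < 0)
    (hden1 : 0 < g₁ xk1 - g₂ xk1) :
    (f₁ xk1 - f₂ xk1) / (g₁ xk1 - g₂ xk1) < lam := by
  have hF : ∑ i, xk1 i * F2 i ≤ f₂ xk1 :=
    dotProduct_le_of_subgradient_of_posHomogeneous hhom₂ hF2 xk1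
  have hG : lam * ∑ i, xk1 i * G1 i ≤ lam * g₁ xk1 :=
    mul_le_mul_of_nonneg_left (dotProduct_le_of_subgradient_of_posHomogeneous hhom₃ hG1 xk1) hlam0
  rw [div_lt_iff₀ hden1]
  linarith

/-- Monotonicity of the generalized RatioDCA step: if `λ_k = r(x_k) ≥ 0` and
the inner minimizer `x_{k+1}` of
`ξ ↦ f₁(ξ) − ⟨ξ,F₂(x_k)⟩ + λ_k(g₂(ξ) − ⟨ξ,G₁(x_k)⟩)` over the unit ball has
strictly negative objective value, then `r(x_{k+1}) < λ_k`. -/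
theorem generalized_ratioDCA_monotone
    (n : ℕ) (f₁ f₂ g₁ g₂ : (Fin n → ℝ) → ℝ)
    (hconv₁ : ConvexOn ℝ Set.univ f₁) (hconv₂ : ConvexOn ℝ Set.univ f₂)
    (hconv₃ : ConvexOn ℝ Set.univ g₁) (hconv₄ : ConvexOn ℝ Set.univ g₂)
    (hhom₁ : ∀ (α : ℝ), 0 ≤ α → ∀ x, f₁ (α • x) = α * f₁ x)
    (hhom₂ : ∀ (α : ℝ), 0 ≤ α → ∀ x, f₂ (α • x) = α * f₂ x)
    (hhom₃ : ∀ (α : ℝ), 0 ≤ α → ∀ x, g₁ (α • x) = α * g₁ x)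
    (hhom₄ : ∀ (α : ℝ), 0 ≤ α → ∀ x, g₂ (α • x) = α * g₂ x)
    (hg : ∀ x, 0 ≤ g₁ x - g₂ x)
    (xk xk1 F2 G1 : Fin n → ℝ) (lam : ℝ)
    (hxk : ∑ i, (xk i) ^ 2 ≤ 1)
    (hF2 : ∀ z, f₂ z ≥ f₂ xk + ∑ i, F2 i * (z i - xk i))
    (hG1 : ∀ z, g₁ z ≥ g₁ xk + ∑ i, G1 i * (z i - xk i))
    (hdenk : 0 < g₁ xk - g₂ xk)
    (hlam : lam = (f₁ xk - f₂ xk) / (g₁ xk - g₂ xk))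
    (hlam0 : 0 ≤ lam)
    (hball : ∑ i, (xk1 i) ^ 2 ≤ 1)
    (hmin : ∀ ξ : Fin n → ℝ, (∑ i, (ξ i) ^ 2) ≤ 1 →
      f₁ xk1 - (∑ i, xk1 i * F2 i) + lam * (g₂ xk1 - ∑ i, xk1 i * G1 i)
        ≤ f₁ ξ - (∑ i, ξ i * F2 i) + lam * (g₂ ξ - ∑ i, ξ i * G1 i))
    (hneg : f₁ xk1 - (∑ i, xk1 i * F2 i)
        + lam * (g₂ xk1 - ∑ i, xk1 i * G1 i) < 0)
    (hden1 : 0 < g₁ xk1 - g₂ xk1) :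
    (f₁ xk1 - f₂ xk1) / (g₁ xk1 - g₂ xk1) < lam :=
  generalized_ratioDCA_monotone_general n f₁ f₂ g₁ g₂ hhom₂ hhom₃ xk xk1 F2 G1 lam hF2 hG1 hlam0
    hneg hden1
end

section
/- Stationarity of generalized RatioDCA: in the setting of generalized RatioDCA with λ_k ≥ 0, if the inner minimum of τ₁(ξ) = f₁(ξ) − ⟨ξ,F₂(x_k)⟩ + λ_k(g₂(ξ) − ⟨ξ,G₁(x_k)⟩) over the unit ball is zero (attained at x_{k+1} = x_k), then 0 ∈ ∂f₁(x_k) − F₂(x_k) − λ_k(G₁(x_k) − ∂g₂(x_k)); i.e., λ_k is a nonlinear eigenvalue of r with eigenvector x_k. -/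
/-! By one-homogeneity, `τ₁ ≥ 0` on the unit ball gives `τ₁ ≥ 0` on all of `ℝⁿ`: the linear form
`⟨·, F₂(x_k) + λ_k G₁(x_k)⟩` lies below the sublinear function `f₁ + λ_k g₂` and touches it at
`x_k`. Extending this form from the diagonal of `E × E` by Hahn–Banach, under the sublinear
`(a, b) ↦ f₁ a + λ_k g₂ b`, splits it into a linear form below `f₁` and one below `λ_k g₂`. Since
their sum touches at `x_k`, each touches its bound there, and a linear form below a sublinear
function that touches it at a point is a subgradient at that point. -/

open Finset

section Sublinear

variable {E : Type*} [AddCommGroup E] [Module ℝ E]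

structure IsSublinear (p : E → ℝ) : Prop where
  smul_of_nonneg : ∀ c : ℝ, 0 ≤ c → ∀ x, p (c • x) = c * p x
  add_le : ∀ x y, p (x + y) ≤ p x + p y

theorem ConvexOn.isSublinear {p : E → ℝ} (hconv : ConvexOn ℝ Set.univ p)
    (hhom : ∀ c : ℝ, 0 ≤ c → ∀ x, p (c • x) = c * p x) : IsSublinear p where
  smul_of_nonneg := hhom
  add_le x y := by
    have hmid := hconv.2 (Set.mem_univ x) (Set.mem_univ y)
      (by norm_num : (0 : ℝ) ≤ 1 / 2) (by norm_num : (0 : ℝ) ≤ 1 / 2) (by norm_num)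
    have hscale : x + y = (2 : ℝ) • ((1 / 2 : ℝ) • x + (1 / 2 : ℝ) • y) := by
      rw [smul_add, smul_smul, smul_smul]; norm_num
    rw [hscale, hhom 2 (by norm_num)]
    simp only [smul_eq_mul] at hmid
    linarith

namespace IsSublinear

variable {p q : E → ℝ}

theorem map_zero (hp : IsSublinear p) : p 0 = 0 := by
  simpa using hp.smul_of_nonneg 0 le_rfl 0

theorem const_mul (hp : IsSublinear p) {c : ℝ} (hc : 0 ≤ c) : IsSublinear fun x => c * p x where
  smul_of_nonneg a ha x := by rw [hp.smul_of_nonneg a ha]; ring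
  add_le x y := by nlinarith [hp.add_le x y]

theorem mul_le_apply_smul (hp : IsSublinear p) (c : ℝ) (x : E) : c * p x ≤ p (c • x) := by
  rcases le_or_gt 0 c with hc | hc
  · rw [hp.smul_of_nonneg c hc]
  · have hneg : 0 ≤ p x + p (-x) := by
      simpa [hp.map_zero] using hp.add_le x (-x)
    have hcx : c • x = (-c) • -x := by rw [neg_smul_neg]
    rw [hcx, hp.smul_of_nonneg (-c) (by linarith)]
    nlinarith

theorem exists_dual_le_eq (hp : IsSublinear p) (x : E) :
    ∃ ℓ : Module.Dual ℝ E, (∀ z, ℓ z ≤ p z) ∧ ℓ x = p x := by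
  have hker : ∀ c : ℝ, c • x = 0 → c • p x = 0 := fun c hc => by
    rcases smul_eq_zero.1 hc with rfl | rfl
    · exact zero_smul ℝ _
    · rw [hp.map_zero, smul_zero]
  set φ := LinearPMap.mkSpanSingleton' (σ := RingHom.id ℝ) x (p x) hker
  obtain ⟨ℓ, hext, hle⟩ := exists_extension_of_le_sublinear φ p
    (fun c hc => hp.smul_of_nonneg c hc.le) hp.add_le <| by
      rintro ⟨z, hz⟩
      obtain ⟨c, rfl⟩ := Submodule.mem_span_singleton.1 hz
      rw [LinearPMap.mkSpanSingleton'_apply]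
      exact hp.mul_le_apply_smul c x
  exact ⟨ℓ, hle, (hext ⟨x, Submodule.mem_span_singleton_self x⟩).trans
    (LinearPMap.mkSpanSingleton'_apply_self _ _ _ _)⟩

theorem exists_dual_split_of_le_add (hp : IsSublinear p) (hq : IsSublinear q)
    (ℓ : Module.Dual ℝ E) (hℓ : ∀ x, ℓ x ≤ p x + q x) :
    ∃ ℓ₁ ℓ₂ : Module.Dual ℝ E, (∀ x, ℓ₁ x ≤ p x) ∧ (∀ x, ℓ₂ x ≤ q x) ∧ ℓ₁ + ℓ₂ = ℓ := by
  set diag : Submodule ℝ (E × E) := LinearMap.ker (LinearMap.fst ℝ E E - LinearMap.snd ℝ E E)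
  have hdiag : ∀ v : diag, v.1.2 = v.1.1 := fun v => (sub_eq_zero.1 v.2).symm
  obtain ⟨L, hext, hle⟩ := exists_extension_of_le_sublinear
    ⟨diag, ℓ ∘ₗ LinearMap.fst ℝ E E ∘ₗ diag.subtype⟩ (fun v => p v.1 + q v.2)
    (fun c hc v => by
      simp only [Prod.smul_fst, Prod.smul_snd, hp.smul_of_nonneg c hc.le,
        hq.smul_of_nonneg c hc.le]
      ring)
    (fun v w => by
      simp only [Prod.fst_add, Prod.snd_add]
      linarith [hp.add_le v.1 w.1, hq.add_le v.2 w.2])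
    (fun v => by simpa [hdiag v] using hℓ v.1.1)
  refine ⟨L ∘ₗ LinearMap.inl ℝ E E, L ∘ₗ LinearMap.inr ℝ E E, fun x => ?_, fun x => ?_, ?_⟩
  · simpa [hq.map_zero] using hle (x, 0)
  · simpa [hp.map_zero] using hle (0, x)
  · ext x
    have hx : (x, x) ∈ diag := by simp [diag]
    simpa [← map_add] using hext ⟨(x, x), hx⟩

/-- For sublinear `p`, `(∀ z, ℓ z ≤ p z) ∧ ℓ x = p x` says exactly `ℓ ∈ ∂p(x)`, so this is the
sum rule `∂(p + c q)(x) = ∂p(x) + c ∂q(x)`. -/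
theorem exists_subgradients_of_le_add_smul (hp : IsSublinear p) (hq : IsSublinear q)
    {c : ℝ} (hc : 0 ≤ c) {ℓ : Module.Dual ℝ E} {x : E} (hℓ : ∀ z, ℓ z ≤ p z + c * q z)
    (hℓx : ℓ x = p x + c * q x) :
    ∃ ℓ₁ ℓ₂ : Module.Dual ℝ E, ((∀ z, ℓ₁ z ≤ p z) ∧ ℓ₁ x = p x) ∧
      ((∀ z, ℓ₂ z ≤ q z) ∧ ℓ₂ x = q x) ∧ ℓ₁ + c • ℓ₂ = ℓ := by
  rcases hc.eq_or_lt with rfl | hc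
  · obtain ⟨ℓ₂, hℓ₂⟩ := hq.exists_dual_le_eq x
    exact ⟨ℓ, ℓ₂, ⟨by simpa using hℓ, by simpa using hℓx⟩, hℓ₂, by simp⟩
  obtain ⟨ℓ₁, ℓ₂, hℓ₁, hℓ₂, hsum⟩ := hp.exists_dual_split_of_le_add (hq.const_mul hc.le) ℓ hℓ
  have hsumx : ℓ₁ x + ℓ₂ x = p x + c * q x := by rw [← hℓx, ← hsum, LinearMap.add_apply]
  refine ⟨ℓ₁, c⁻¹ • ℓ₂, ⟨hℓ₁, ?_⟩, ⟨fun z => ?_, ?_⟩, ?_⟩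
  · linarith [hℓ₁ x, hℓ₂ x]
  · rw [LinearMap.smul_apply, smul_eq_mul, inv_mul_le_iff₀ hc]
    exact hℓ₂ z
  · rw [LinearMap.smul_apply, smul_eq_mul, inv_mul_eq_iff_eq_mul₀ hc.ne']
    linarith [hℓ₁ x, hℓ₂ x]
  · rw [smul_inv_smul₀ hc.ne', hsum]

end IsSublinear
end Sublinear

section Coordinates

variable {ι : Type*} [Fintype ι]

theorem nonneg_of_nonneg_of_sum_sq_le_one {φ : (ι → ℝ) → ℝ}
    (hφ : ∀ c : ℝ, 0 ≤ c → ∀ x, φ (c • x) = c * φ x)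
    (h : ∀ ξ : ι → ℝ, ∑ i, ξ i ^ 2 ≤ 1 → 0 ≤ φ ξ) (z : ι → ℝ) : 0 ≤ φ z := by
  set s := ∑ i, z i ^ 2 + 1
  have hs : 1 ≤ s := le_add_of_nonneg_left (sum_nonneg fun i _ => sq_nonneg (z i))
  have hball : ∑ i, (s⁻¹ • z) i ^ 2 ≤ 1 := by
    simp only [Pi.smul_apply, smul_eq_mul, mul_pow, ← mul_sum]
    rw [inv_pow, inv_mul_le_one₀ (by positivity)]
    nlinarith
  have hz : z = s • s⁻¹ • z := (smul_inv_smul₀ (by positivity) z).symm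
  rw [hz, hφ s (by positivity)]
  exact mul_nonneg (by positivity) (h _ hball)

theorem add_sum_dotProductEquiv_symm_mul_sub_le [DecidableEq ι] {f : (ι → ℝ) → ℝ}
    {ℓ : Module.Dual ℝ (ι → ℝ)} {x : ι → ℝ} (hle : ∀ z, ℓ z ≤ f z) (hx : ℓ x = f x)
    (z : ι → ℝ) : f z ≥ f x + ∑ i, (dotProductEquiv ℝ ι).symm ℓ i * (z i - x i) := by
  have hdot : ∑ i, (dotProductEquiv ℝ ι).symm ℓ i * (z i - x i) = ℓ (z - x) := by
    conv_rhs => rw [← (dotProductEquiv ℝ ι).apply_symm_apply ℓ]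
    rfl
  rw [hdot, map_sub, hx]
  linarith [hle z]

end Coordinates

theorem generalized_ratioDCA_stationary_general
    (n : ℕ) (f₁ g₂ : (Fin n → ℝ) → ℝ)
    (hconv₁ : ConvexOn ℝ Set.univ f₁)
    (hconv₄ : ConvexOn ℝ Set.univ g₂)
    (hhom₁ : ∀ (α : ℝ), 0 ≤ α → ∀ x, f₁ (α • x) = α * f₁ x)
    (hhom₄ : ∀ (α : ℝ), 0 ≤ α → ∀ x, g₂ (α • x) = α * g₂ x)
    (xk F2 G1 : Fin n → ℝ) (lam : ℝ)
    (hlam0 : 0 ≤ lam)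
    (hmin : ∀ ξ : Fin n → ℝ, (∑ i, (ξ i) ^ 2) ≤ 1 →
      0 ≤ f₁ ξ - (∑ i, ξ i * F2 i) + lam * (g₂ ξ - ∑ i, ξ i * G1 i))
    (hzero : f₁ xk - (∑ i, xk i * F2 i)
        + lam * (g₂ xk - ∑ i, xk i * G1 i) = 0) :
    ∃ u v : Fin n → ℝ,
      (∀ z, f₁ z ≥ f₁ xk + ∑ i, u i * (z i - xk i)) ∧
      (∀ z, g₂ z ≥ g₂ xk + ∑ i, v i * (z i - xk i)) ∧
      ∀ i, u i - F2 i - lam * (G1 i - v i) = 0 := by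
  have hf₁ := hconv₁.isSublinear hhom₁
  have hg₂ := hconv₄.isSublinear hhom₄
  set e := dotProductEquiv ℝ (Fin n)
  have he_apply : ∀ ξ, e (F2 + lam • G1) ξ = ∑ i, ξ i * F2 i + lam * ∑ i, ξ i * G1 i := by
    intro ξ
    show (F2 + lam • G1) ⬝ᵥ ξ = ξ ⬝ᵥ F2 + lam * ξ ⬝ᵥ G1
    rw [add_dotProduct, smul_dotProduct, dotProduct_comm F2, dotProduct_comm G1, smul_eq_mul]
  have hτ_nonneg : ∀ z, e (F2 + lam • G1) z ≤ f₁ z + lam * g₂ z := by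
    refine fun z => sub_nonneg.1 (nonneg_of_nonneg_of_sum_sq_le_one
      (φ := fun z => f₁ z + lam * g₂ z - e (F2 + lam • G1) z) (fun c hc x => ?_) (fun ξ hξ => ?_) z)
    · rw [map_smul, hhom₁ c hc, hhom₄ c hc, smul_eq_mul]; ring
    · rw [he_apply]; linarith [hmin ξ hξ]
  obtain ⟨ℓ₁, ℓ₂, ⟨hℓ₁, hℓ₁x⟩, ⟨hℓ₂, hℓ₂x⟩, hsum⟩ :=
    hf₁.exists_subgradients_of_le_add_smul hg₂ hlam0 hτ_nonneg (x := xk)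
      (by rw [he_apply]; linarith)
  refine ⟨e.symm ℓ₁, e.symm ℓ₂, add_sum_dotProductEquiv_symm_mul_sub_le hℓ₁ hℓ₁x,
    add_sum_dotProductEquiv_symm_mul_sub_le hℓ₂ hℓ₂x, fun i => ?_⟩
  have hi := congr_fun (congr_arg e.symm hsum) i
  simp only [map_add, map_smul, LinearEquiv.symm_apply_apply, Pi.add_apply, Pi.smul_apply,
    smul_eq_mul] at hi
  linarith

/-- Stationarity of the generalized RatioDCA: if `λ_k = r(x_k) ≥ 0` and the
inner minimum of `τ₁` over the unit ball is zero, attained at `x_k` itself,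
then `0 ∈ ∂f₁(x_k) − F₂(x_k) − λ_k(G₁(x_k) − ∂g₂(x_k))`, i.e. `(λ_k, x_k)`
is a nonlinear eigenpair of `r`. -/
theorem generalized_ratioDCA_stationary
    (n : ℕ) (f₁ f₂ g₁ g₂ : (Fin n → ℝ) → ℝ)
    (hconv₁ : ConvexOn ℝ Set.univ f₁) (hconv₂ : ConvexOn ℝ Set.univ f₂)
    (hconv₃ : ConvexOn ℝ Set.univ g₁) (hconv₄ : ConvexOn ℝ Set.univ g₂)
    (hhom₁ : ∀ (α : ℝ), 0 ≤ α → ∀ x, f₁ (α • x) = α * f₁ x)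
    (hhom₂ : ∀ (α : ℝ), 0 ≤ α → ∀ x, f₂ (α • x) = α * f₂ x)
    (hhom₃ : ∀ (α : ℝ), 0 ≤ α → ∀ x, g₁ (α • x) = α * g₁ x)
    (hhom₄ : ∀ (α : ℝ), 0 ≤ α → ∀ x, g₂ (α • x) = α * g₂ x)
    (hg : ∀ x, 0 ≤ g₁ x - g₂ x)
    (xk F2 G1 : Fin n → ℝ) (lam : ℝ)
    (hxknorm : ∑ i, (xk i) ^ 2 = 1)
    (hF2 : ∀ z, f₂ z ≥ f₂ xk + ∑ i, F2 i * (z i - xk i))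
    (hG1 : ∀ z, g₁ z ≥ g₁ xk + ∑ i, G1 i * (z i - xk i))
    (hdenk : 0 < g₁ xk - g₂ xk)
    (hlam : lam = (f₁ xk - f₂ xk) / (g₁ xk - g₂ xk))
    (hlam0 : 0 ≤ lam)
    (hmin : ∀ ξ : Fin n → ℝ, (∑ i, (ξ i) ^ 2) ≤ 1 →
      0 ≤ f₁ ξ - (∑ i, ξ i * F2 i) + lam * (g₂ ξ - ∑ i, ξ i * G1 i))
    (hzero : f₁ xk - (∑ i, xk i * F2 i)
        + lam * (g₂ xk - ∑ i, xk i * G1 i) = 0) :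
    ∃ u v : Fin n → ℝ,
      (∀ z, f₁ z ≥ f₁ xk + ∑ i, u i * (z i - xk i)) ∧
      (∀ z, g₂ z ≥ g₂ xk + ∑ i, v i * (z i - xk i)) ∧
      ∀ i, u i - F2 i - lam * (G1 i - v i) = 0 :=
  generalized_ratioDCA_stationary_general n f₁ g₂ hconv₁ hconv₄ hhom₁ hhom₄ xk F2 G1 lam hlam0 hmin
    hzero
end
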